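/- If an n-vertex graph G is contained in a b-blowup of a fan F, then there exists a set X ⊆ V(G) with |X| ≤ b such that bw(G−X) ≤ 2b−1. -/

import Mathlib

open SimpleGraph

/-- Base-2 logarithm with the convention `log x = 1` for `x ≤ 2`. -/
noncomputable def log2' (x : ℝ) : ℝ := if x ≤ 2 then 1 else Real.logb 2 x

/-- `G` is contained in `G'`: `G` is isomorphic to a subgraph of `G'`. -/
def IsContainedIn {α β : Type} (G : SimpleGraph α) (G' : SimpleGraph β) : Prop :=
  ∃ f : α → β, Function.Injective f ∧ ∀ u v : α, G.Adj u v → G'.Adj (f u) (f v)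

/-- The `b`-blowup of a graph `H`: each vertex is replaced by a copy of `K_b`, and each edge
by a complete bipartite graph between the corresponding copies. -/
def blowup {α : Type} (H : SimpleGraph α) (b : ℕ) : SimpleGraph (α × Fin b) where
  Adj x y := (x.1 = y.1 ∧ x.2 ≠ y.2) ∨ H.Adj x.1 y.1
  symm := by
    constructor
    rintro x y (⟨h1, h2⟩ | h)
    · exact Or.inl ⟨h1.symm, fun hh => h2 hh.symm⟩
    · exact Or.inr h.symm
  loopless := by
    constructor
    rintro x (⟨_, h2⟩ | h)
    · exact h2 rfl
    · exact H.loopless.irrefl _ h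

/-- The fan on `p + 1` vertices: vertex `0` is the center, adjacent to every vertex of the
path `1, 2, …, p`. -/
def fan (p : ℕ) : SimpleGraph (Fin (p + 1)) :=
  SimpleGraph.fromRel (fun i j => i = 0 ∨ (i : ℕ) + 1 = (j : ℕ))

/-- The bandwidth of `G` is at most `b`: some ordering `v_1, …, v_n` of the vertices
satisfies `|i - j| ≤ b` for every edge `v_i v_j`. -/
def BandwidthLE {α : Type} [Fintype α] (G : SimpleGraph α) (b : ℝ) : Prop :=
  ∃ e : α ≃ Fin (Fintype.card α),
    ∀ u v : α, G.Adj u v → |((e u : ℕ) : ℝ) - ((e v : ℕ) : ℝ)| ≤ b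

/-- The graph `G - X` obtained from `G` by deleting the vertices in `X`. -/
def deleteVerts {α : Type} (G : SimpleGraph α) (X : Finset α) :
    SimpleGraph {v : α // v ∉ X} :=
  SimpleGraph.comap Subtype.val G

/-- `F` is a fan: it is isomorphic to `fan p` for some `p`. -/
def IsFan {α : Type} (F : SimpleGraph α) : Prop := ∃ p : ℕ, Nonempty (F ≃g fan p)

/-! Map `G` into the `b`-blowup of a fan with center `0` and path `1, …, p`, and delete the
(at most `b`) vertices sent to the center's clique. The remaining vertices are labelled by their
position `c + b * i` in the lexicographic order of `Fin (p + 1) × Fin b`; adjacent vertices lie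
in the same or in consecutive cliques, so their labels differ by less than `2b`, and ranking the
labels turns them into an ordering of bandwidth at most `2b - 1`. -/

lemma IsContainedIn.trans {α β γ : Type} {G : SimpleGraph α} {G' : SimpleGraph β}
    {G'' : SimpleGraph γ} (h : IsContainedIn G G') (h' : IsContainedIn G' G'') :
    IsContainedIn G G'' := by
  obtain ⟨f, hf, hadj⟩ := h
  obtain ⟨f', hf', hadj'⟩ := h'
  exact ⟨f' ∘ f, hf'.comp hf, fun u v huv => hadj' _ _ (hadj u v huv)⟩

lemma isContainedIn_blowup_of_injective {α β : Type} {H : SimpleGraph α} {H' : SimpleGraph β}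
    (φ : H →g H') (hφ : Function.Injective φ) (b : ℕ) :
    IsContainedIn (blowup H b) (blowup H' b) := by
  refine ⟨Prod.map φ id, hφ.prodMap Function.injective_id, ?_⟩
  rintro x y (⟨h1, h2⟩ | h)
  · exact Or.inl ⟨congrArg φ h1, h2⟩
  · exact Or.inr (φ.map_adj h)

lemma Function.Injective.card_filter_fst_eq_le {V β γ : Type} [Fintype V] [DecidableEq β]
    [Fintype γ] {f : V → β × γ} (hf : Function.Injective f) (a : β) :
    (Finset.univ.filter fun v => (f v).1 = a).card ≤ Fintype.card γ := by
  refine Finset.card_le_card_of_injOn (fun v => (f v).2) (fun _ _ => Finset.mem_univ _) ?_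
  intro u hu v hv huv
  simp only [Finset.coe_filter, Finset.mem_univ, true_and, Set.mem_ofPred_eq] at hu hv
  exact hf (Prod.ext (hu.trans hv.symm) huv)

lemma StrictMono.val_sub_le_sub {m : ℕ} {f : Fin m → ℕ} (hf : StrictMono f) (i j : Fin m) :
    (j : ℕ) - i ≤ f j - f i := by
  rw [← Fin.card_Ico, ← Nat.card_Ico]
  refine Finset.card_le_card_of_injOn f (fun k hk => ?_) hf.injective.injOn
  simp only [Finset.coe_Ico, Set.mem_Ico] at hk ⊢
  exact ⟨hf.monotone hk.1, hf hk.2⟩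

lemma exists_equiv_fin_sub_le_of_injective {W : Type} [Fintype W] {g : W → ℕ}
    (hg : Function.Injective g) :
    ∃ e : W ≃ Fin (Fintype.card W), ∀ u v, (e v : ℕ) - e u ≤ g v - g u := by
  let s := Finset.univ.image g
  have hs : s.card = Fintype.card W := by
    rw [Finset.card_image_of_injective _ hg, Finset.card_univ]
  let oi := s.orderIsoOfFin hs
  let e₀ : W → Fin (Fintype.card W) := fun v => oi.symm ⟨g v, Finset.mem_image_of_mem g (by simp)⟩
  have hoi : ∀ v, (oi (e₀ v) : ℕ) = g v := fun v => by simp [e₀]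
  have he₀ : Function.Injective e₀ := fun u v huv => hg (by rw [← hoi u, ← hoi v, huv])
  refine ⟨Equiv.ofBijective e₀ ((Fintype.bijective_iff_injective_and_card e₀).mpr ⟨he₀, by simp⟩),
    fun u v => ?_⟩
  have hmono : StrictMono fun i => (oi i : ℕ) := fun i j hij => oi.strictMono hij
  simpa only [Equiv.ofBijective_apply, hoi] using hmono.val_sub_le_sub (e₀ u) (e₀ v)

lemma abs_natCast_sub_le_of_lt {a c k : ℕ} (hac : a < c + k) (hca : c < a + k) :
    |(a : ℝ) - c| ≤ k - 1 := by
  have h₁ : (a : ℝ) + 1 ≤ c + k := by exact_mod_cast hac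
  have h₂ : (c : ℝ) + 1 ≤ a + k := by exact_mod_cast hca
  rw [abs_sub_le_iff]
  constructor <;> linarith

lemma bandwidthLE_of_injective {W : Type} [Fintype W] (G : SimpleGraph W) {g : W → ℕ}
    (hg : Function.Injective g) {k : ℕ} (hk : ∀ u v, G.Adj u v → g v < g u + k) :
    BandwidthLE G (k - 1) := by
  obtain ⟨e, he⟩ := exists_equiv_fin_sub_le_of_injective hg
  refine ⟨e, fun u v huv => ?_⟩
  have := hk u v huv
  have := hk v u huv.symm
  have := he u v
  have := he v u
  exact abs_natCast_sub_le_of_lt (by omega) (by omega)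

lemma fan_val_le_succ_of_adj {p : ℕ} {i j : Fin (p + 1)} (h : (fan p).Adj i j) (hi : i ≠ 0)
    (hj : j ≠ 0) : (j : ℕ) ≤ i + 1 := by
  simp only [fan, fromRel_adj] at h
  rcases h with ⟨-, (h | h) | (h | h)⟩
  · exact absurd h hi
  · omega
  · exact absurd h hj
  · omega

lemma blowup_fan_finProdFinEquiv_lt {p b : ℕ} {x y : Fin (p + 1) × Fin b}
    (h : (blowup (fan p) b).Adj x y) (hx : x.1 ≠ 0) (hy : y.1 ≠ 0) :
    (finProdFinEquiv y : ℕ) < finProdFinEquiv x + 2 * b := by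
  have hxy : (y.1 : ℕ) ≤ x.1 + 1 := by
    rcases h with ⟨h, -⟩ | h
    · rw [h]; omega
    · exact fan_val_le_succ_of_adj h hx hy
  have hmul := Nat.mul_le_mul_left b hxy
  rw [mul_add, mul_one] at hmul
  change (y.2 : ℕ) + b * y.1 < x.2 + b * x.1 + 2 * b
  omega

theorem fan_blowup_del_set_bandwidth_general
    (b : ℕ) (V : Type) [Fintype V] [DecidableEq V] (G : SimpleGraph V)
    (α : Type) (F : SimpleGraph α) (hF : IsFan F)
    (h : IsContainedIn G (blowup F b)) :
    ∃ X : Finset V, X.card ≤ b ∧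
      BandwidthLE (deleteVerts G X) (2 * (b : ℝ) - 1) := by
  obtain ⟨p, ⟨φ⟩⟩ := hF
  obtain ⟨f, hf, hadj⟩ :=
    h.trans (isContainedIn_blowup_of_injective φ.toHom φ.injective b)
  refine ⟨Finset.univ.filter fun v => (f v).1 = 0,
    (hf.card_filter_fst_eq_le 0).trans_eq (Fintype.card_fin b), ?_⟩
  have hcenter (v : {v // v ∉ Finset.univ.filter fun v => (f v).1 = 0}) : (f v).1 ≠ 0 := by
    simpa using v.2
  have hbw := bandwidthLE_of_injective (deleteVerts G _)
    (g := fun v => (finProdFinEquiv (f v) : ℕ))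
    (fun u v huv => Subtype.ext (hf (finProdFinEquiv.injective (Fin.ext huv))))
    (fun u v huv => blowup_fan_finProdFinEquiv_lt (hadj _ _ huv) (hcenter u) (hcenter v))
  push_cast at hbw
  exact hbw

/-- **Lemma.** If an `n`-vertex graph `G` is contained in a `b`-blowup of a fan `F`, then
there exists `X ⊆ V(G)` with `|X| ≤ b` such that `bw(G − X) ≤ 2b − 1`. -/
theorem fan_blowup_del_set_bandwidth
    (n b : ℕ) (V : Type) [Fintype V] [DecidableEq V] (G : SimpleGraph V)
    (hcard : Fintype.card V = n)
    (α : Type) (F : SimpleGraph α) (hF : IsFan F)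
    (h : IsContainedIn G (blowup F b)) :
    ∃ X : Finset V, X.card ≤ b ∧
      BandwidthLE (deleteVerts G X) (2 * (b : ℝ) - 1) :=
  fan_blowup_del_set_bandwidth_general b V G α F hF h
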